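/- No critical point of f is periodic: there is no c ∈ U' with f′(c) = 0, f^j(c) ∈ U' for all 0 ≤ j < p, and f^p(c) = c for some integer p ≥ 1. -/

import Mathlib

open Set Metric Filter Topology

/-- The local degree `deg(f,z)`: the order of vanishing at `z` of `ζ ↦ f ζ - f z`,
i.e. the least `n ≥ 1` whose `n`-th derivative of `ζ ↦ f ζ - f z` at `z` is nonzero. -/
noncomputable def localDeg (f : ℂ → ℂ) (z : ℂ) : ℕ :=
  sInf {n : ℕ | 0 < n ∧ iteratedDeriv n (fun w => f w - f z) z ≠ 0}

/-- `χ(z) = sup_{n ≥ 1} deg(fⁿ, z)`, valued in `ℕ∞`. -/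
noncomputable def chiFn (f : ℂ → ℂ) (z : ℂ) : ℕ∞ :=
  ⨆ n : ℕ, (localDeg (f^[n + 1]) z : ℕ∞)

/-- The open unit disk `𝔻 ⊆ ℂ`. -/
def uDisk : Set ℂ := Metric.ball 0 1

/-- `V = (γ_1 ∘ g_{ε_1} ∘ γ_2 ∘ g_{ε_2} ∘ ⋯ ∘ γ_k ∘ g_{ε_k})(𝔻)`. -/
noncomputable def Vset {d : ℕ} (g : Fin d → ℂ → ℂ) {k : ℕ}
    (gam : Fin k → ℂ → ℂ) (eps : Fin k → Fin d) : Set ℂ :=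
  (List.ofFn (fun l => gam l ∘ g (eps l))).foldr (· ∘ ·) id '' uDisk

/-- `K_0 = U` and, for `k ≥ 1`, `K_k = {z ∈ U' : f^j(z) ∈ U' for 0 ≤ j ≤ k-1}`,
the `k`-th preimage `f^{-k}(U)`. -/
def Kiter (U U' : Set ℂ) (f : ℂ → ℂ) : ℕ → Set ℂ
  | 0 => U
  | k + 1 => {z ∈ U' | ∀ j ≤ k, f^[j] z ∈ U'}

/-!
A periodic critical point `c` of period `p` is a superattracting fixed point of `f^[p]`:
`(f^[p])'(c) = 0`. Hence a small ball around `c` is mapped into itself by `f^[p]` and its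
points never leave `U'` under iteration of `f`. So `c` lies in the interior of `K_f`, which is
impossible since `K_f = ∂K_f`.
-/

section Iterate

variable {X : Type*} [TopologicalSpace X] {f : X → X} {s : Set X}

theorem ContinuousOn.eventually_forall_iterate_mem (hf : ContinuousOn f s) (hs : IsOpen s) :
    ∀ {k : ℕ} {x : X}, (∀ j < k, f^[j] x ∈ s) → ∀ᶠ z in 𝓝 x, ∀ j < k, f^[j] z ∈ s
  | 0, _, _ => by simp
  | k + 1, x, hx => by
    have hxs : x ∈ s := hx 0 k.succ_pos
    have hfx : ∀ᶠ z in 𝓝 x, ∀ j < k, f^[j] (f z) ∈ s :=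
      (hf.continuousAt (hs.mem_nhds hxs)).eventually
        (hf.eventually_forall_iterate_mem hs fun j hj => hx (j + 1) (by omega))
    filter_upwards [hs.mem_nhds hxs, hfx] with z hz hfz
    rintro (_ | j) hj
    · exact hz
    · exact hfz j (by omega)

theorem forall_iterate_mem_of_forall_iterate_period {α : Type*} {f : α → α} {s : Set α}
    {p : ℕ} (hp : 0 < p) {z : α} (h : ∀ m, ∀ j < p, f^[j] ((f^[p])^[m] z) ∈ s) (n : ℕ) :
    f^[n] z ∈ s := by
  have := h (n / p) (n % p) (Nat.mod_lt n hp)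
  rwa [← Function.iterate_mul, ← Function.iterate_add_apply, Nat.mod_add_div] at this

end Iterate

section Derivative

variable {𝕜 : Type*} [NontriviallyNormedField 𝕜]

theorem DifferentiableOn.differentiableAt_iterate {E : Type*} [NormedAddCommGroup E]
    [NormedSpace 𝕜 E] {f : E → E} {s : Set E} (hf : DifferentiableOn 𝕜 f s) (hs : IsOpen s)
    {x : E} : ∀ {k : ℕ}, (∀ j < k, f^[j] x ∈ s) → DifferentiableAt 𝕜 (f^[k]) x
  | 0, _ => differentiableAt_id
  | k + 1, hx => by
    rw [Function.iterate_succ']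
    exact (hf.differentiableAt (hs.mem_nhds (hx k k.lt_succ_self))).comp x
      (hf.differentiableAt_iterate hs fun j hj => hx j (by omega))

theorem HasDerivAt.iterate_succ_of_eq_zero {f : 𝕜 → 𝕜} {x : 𝕜} (hf : HasDerivAt f 0 x) {k : ℕ}
    (hk : DifferentiableAt 𝕜 (f^[k]) (f x)) : HasDerivAt (f^[k + 1]) 0 x := by
  rw [Function.iterate_succ]
  simpa using hk.hasDerivAt.comp x hf

theorem HasDerivAt.eventually_forall_iterate_mem {g : 𝕜 → 𝕜} {g' c : 𝕜}
    (hg : HasDerivAt g g' c) (hg' : ‖g'‖ < 1) (hc : g c = c) {s : Set 𝕜} (hs : s ∈ 𝓝 c) :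
    ∀ᶠ z in 𝓝 c, ∀ n, g^[n] z ∈ s := by
  obtain ⟨r, hg'r, hr⟩ := exists_between hg'
  have hcontract : ∀ᶠ z in 𝓝 c, ‖g z - c‖ ≤ r * ‖z - c‖ := by
    filter_upwards [(hasDerivAt_iff_isLittleO.mp hg).def (sub_pos.mpr hg'r)] with z hz
    rw [hc] at hz
    calc ‖g z - c‖ ≤ ‖(z - c) • g'‖ + ‖g z - c - (z - c) • g'‖ := norm_le_insert' _ _
      _ ≤ ‖z - c‖ * ‖g'‖ + (r - ‖g'‖) * ‖z - c‖ := by rw [norm_smul]; gcongr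
      _ = r * ‖z - c‖ := by ring
  obtain ⟨δ, hδ, hball⟩ := Metric.mem_nhds_iff.mp (inter_mem hcontract hs)
  have hmaps : MapsTo g (ball c δ) (ball c δ) := fun z hz => by
    have hgz := (hball hz).1
    rw [mem_ball, dist_eq_norm] at hz ⊢
    calc ‖g z - c‖ ≤ r * ‖z - c‖ := hgz
      _ ≤ ‖z - c‖ := mul_le_of_le_one_left (norm_nonneg _) hr.le
      _ < δ := hz
  filter_upwards [ball_mem_nhds c hδ] with z hz n
  exact (hball (hmaps.iterate n hz)).2

end Derivative

theorem stmt_4_general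
    (N : ℕ)
    (Ui : Fin N → Set ℂ)
    (hUiopen : ∀ i, IsOpen (Ui i))
    (U' : Set ℂ) (hU' : U' = ⋃ i, Ui i)
    (f : ℂ → ℂ)
    (hf : ∃ Ω : Set ℂ, IsOpen Ω ∧ closure U' ⊆ Ω ∧ DifferentiableOn ℂ f Ω)
    (Kf Jf : Set ℂ)
    (hKf : Kf = {z ∈ U' | ∀ n : ℕ, f^[n] z ∈ U'})
    (hJf : Jf = frontier Kf)
    (hKJ : Kf = Jf)
    :
    ¬ ∃ c ∈ U', deriv f c = 0 ∧
      ∃ p : ℕ, 1 ≤ p ∧ (∀ j < p, f^[j] c ∈ U') ∧ f^[p] c = c := by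
  rintro ⟨c, hc, hcrit, p, hp, horb, hper⟩
  obtain ⟨k, rfl⟩ : ∃ k, p = k + 1 := ⟨p - 1, by omega⟩
  have hU'open : IsOpen U' := hU' ▸ isOpen_iUnion hUiopen
  have hfU' : DifferentiableOn ℂ f U' := by
    obtain ⟨Ω, -, hΩ, hfΩ⟩ := hf
    exact hfΩ.mono (subset_closure.trans hΩ)
  have hderiv : HasDerivAt (f^[k + 1]) 0 c := by
    refine HasDerivAt.iterate_succ_of_eq_zero ?_ ?_
    · exact hcrit ▸ (hfU'.differentiableAt (hU'open.mem_nhds hc)).hasDerivAt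
    · exact hfU'.differentiableAt_iterate hU'open fun j hj => horb (j + 1) (by omega)
  have horb_nhds : ∀ᶠ z in 𝓝 c, ∀ j < k + 1, f^[j] z ∈ U' :=
    hfU'.continuousOn.eventually_forall_iterate_mem hU'open horb
  have hnhds : ∀ᶠ z in 𝓝 c, z ∈ Kf := by
    filter_upwards [hderiv.eventually_forall_iterate_mem (by simp) hper horb_nhds] with z hz
    have hall := forall_iterate_mem_of_forall_iterate_period k.succ_pos hz
    exact hKf ▸ ⟨hall 0, hall⟩
  have hint : c ∈ interior Kf := mem_interior_iff_mem_nhds.mpr hnhds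
  have hfront : c ∈ frontier Kf := hJf ▸ hKJ ▸ interior_subset hint
  exact hfront.2 hint

theorem stmt_4
    (N : ℕ) (hN : 1 ≤ N)
    (U : Set ℂ) (hUopen : IsOpen U) (hUne : U.Nonempty)
    (hUdisk : ∃ h : ℂ → ℂ, DifferentiableOn ℂ h uDisk ∧ Set.BijOn h uDisk U)
    (Ui : Fin N → Set ℂ)
    (hUiopen : ∀ i, IsOpen (Ui i)) (hUine : ∀ i, (Ui i).Nonempty)
    (hUidisk : ∀ i, ∃ h : ℂ → ℂ, DifferentiableOn ℂ h uDisk ∧ Set.BijOn h uDisk (Ui i))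
    (hUidisj : ∀ i j, i ≠ j → Disjoint (Ui i) (Ui j))
    (hUicl : ∀ i, closure (Ui i) ⊆ U)
    (U' : Set ℂ) (hU' : U' = ⋃ i, Ui i)
    (f : ℂ → ℂ)
    (hf : ∃ Ω : Set ℂ, IsOpen Ω ∧ closure U' ⊆ Ω ∧ DifferentiableOn ℂ f Ω)
    (dI : Fin N → ℕ) (hdI : ∀ i, 1 ≤ dI i)
    (hfmaps : ∀ i, Set.MapsTo f (Ui i) U)
    (hfdeg : ∀ i, ∀ w ∈ U, (∑ᶠ z ∈ {z ∈ Ui i | f z = w}, localDeg f z) = dI i)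
    (d : ℕ) (hdsum : d = ∑ i, dI i) (hd2 : 2 ≤ d)
    (Kf Jf : Set ℂ)
    (hKf : Kf = {z ∈ U' | ∀ n : ℕ, f^[n] z ∈ U'})
    (hJf : Jf = frontier Kf)
    (hKJ : Kf = Jf) (hKne : Kf.Nonempty) (hKcomp : IsCompact Kf)
    (hKtd : IsTotallyDisconnected Kf)
    (hKperf : ∀ x ∈ Kf, x ∈ closure (Kf \ {x}))
    (hcritK : ∀ z ∈ U', deriv f z = 0 → z ∈ Kf)
    :
    ¬ ∃ c ∈ U', deriv f c = 0 ∧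
      ∃ p : ℕ, 1 ≤ p ∧ (∀ j < p, f^[j] c ∈ U') ∧ f^[p] c = c :=
  stmt_4_general N Ui hUiopen U' hU' f hf Kf Jf hKf hJf hKJ
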